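/- Every element of Loop(V) has a unique minimal representative ((u_1,v_1), ..., (u_n,v_n)) satisfying: (1) for each i, u_i and v_i are linearly independent; (2) for each i < n, either v_i ≠ u_{i+1}, or v_i − u_i and v_{i+1} − u_{i+1} are linearly independent. -/

import Mathlib

/-!
STATEMENT 9: Every element of `Loop(V)` has a unique minimal representative
`((u₁,v₁), …, (uₙ,vₙ))` with each `uᵢ, vᵢ` linearly independent, and for each `i < n`
either `vᵢ ≠ u_{i+1}` or `vᵢ − uᵢ` and `v_{i+1} − u_{i+1}` are linearly independent.
-/

open FreeMonoid

variable (V : Type*) [AddCommGroup V] [Module ℝ V]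

/-- The defining relations of `Loop(V)` on the free monoid over `V × V`. -/
inductive LoopRel : FreeMonoid (V × V) → FreeMonoid (V × V) → Prop
  | comp (v u r : V) (h : Collinear ℝ ({v, u, r} : Set V)) :
      LoopRel (of (v, u) * of (u, r)) (of (v, r))
  | triv (v u : V) (h : ¬ LinearIndependent ℝ ![v, u]) :
      LoopRel (of (v, u)) 1

/-- The group `Loop(V)` generated by triangular loops. -/
abbrev LoopGrp := (conGen (LoopRel V)).Quotient

variable {V}

/-- The quotient map `FMon(V × V) → Loop(V)`. -/
abbrev Loopmk : FreeMonoid (V × V) →* LoopGrp V := (conGen (LoopRel V)).mk'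

/-- Minimal words in `Loop(V)`: no rewriting step applies. -/
def IsMinLoopWord (l : List (V × V)) : Prop :=
  (∀ p ∈ l, LinearIndependent ℝ ![p.1, p.2]) ∧
  l.Chain' (fun p q => p.2 ≠ q.1 ∨ LinearIndependent ℝ ![p.2 - p.1, q.2 - q.1])

/-!
Reading a word from right to left, prepend one generator at a time to a minimal word: a
degenerate generator is dropped, and a generator that is mergeable with the head of the word is
merged with it, the result being prepended again to the tail. This computes a minimal word with
the same image in `Loop(V)`. Prepending `(v, u)` after `(u, r)` gives the same word as prepending
`(v, r)` when `v, u, r` are collinear, so the reduction is invariant under the defining relations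
and hence only depends on the element of `Loop(V)`; since it fixes minimal words, a minimal
representative is unique.
-/

section Collinear

variable {K W : Type*} [Field K] [AddCommGroup W] [Module K W]

theorem not_linearIndependent_pair_iff_exists_smul {x y : W} :
    ¬ LinearIndependent K ![x, y] ↔ ∃ (z : W) (a b : K), x = a • z ∧ y = b • z := by
  constructor
  · intro h
    by_cases hx : x = 0
    · exact ⟨y, 0, 1, by simp [hx], by simp⟩
    · obtain ⟨a, rfl⟩ := not_forall_not.1 (mt (LinearIndependent.pair_iff' hx).2 h)
      exact ⟨x, 1, a, by simp, rfl⟩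
  · rintro ⟨z, a, b, rfl, rfl⟩ h
    obtain ⟨-, hb⟩ := LinearIndependent.pair_iff.1 h b (-a) (by module)
    obtain rfl : a = 0 := neg_eq_zero.1 hb
    exact h.ne_zero 0 (by simp)

theorem not_linearIndependent_pair_self (x : W) : ¬ LinearIndependent K ![x, x] :=
  not_linearIndependent_pair_iff_exists_smul.2 ⟨x, 1, 1, by simp, by simp⟩

theorem collinear_triple_iff_exists_smul {v u r : W} :
    Collinear K ({v, u, r} : Set W) ↔
      ∃ (z : W) (a b : K), u - v = a • z ∧ r - v = b • z := by
  simp only [collinear_iff_of_mem (Set.mem_insert v _), Set.forall_mem_insert,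
    Set.mem_singleton_iff, forall_eq, vadd_eq_add, ← sub_eq_iff_eq_add]
  constructor
  · rintro ⟨z, -, ⟨a, ha⟩, ⟨b, hb⟩⟩
    exact ⟨z, a, b, ha, hb⟩
  · rintro ⟨z, a, b, ha, hb⟩
    exact ⟨z, ⟨0, by simp⟩, ⟨a, ha⟩, ⟨b, hb⟩⟩

theorem collinear_triple_iff_not_linearIndependent_sub {v u r : W} :
    Collinear K ({v, u, r} : Set W) ↔ ¬ LinearIndependent K ![u - v, r - u] := by
  rw [← LinearIndependent.pair_add_right_iff, sub_add_sub_cancel',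
    not_linearIndependent_pair_iff_exists_smul, collinear_triple_iff_exists_smul]

theorem collinear_zero_iff_not_linearIndependent {x y : W} :
    Collinear K ({0, x, y} : Set W) ↔ ¬ LinearIndependent K ![x, y] := by
  rw [collinear_triple_iff_not_linearIndependent_sub, sub_zero,
    show y - x = (-1 : K) • x + y by module, LinearIndependent.pair_add_smul_right_iff]

theorem not_linearIndependent_pair_of_collinear {a b c : W} (hab : a ≠ b)
    (h₀ : ¬ LinearIndependent K ![a, b]) (h : Collinear K ({a, b, c} : Set W)) :
    ¬ LinearIndependent K ![a, c] ∧ ¬ LinearIndependent K ![b, c] := by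
  rw [← collinear_zero_iff_not_linearIndependent] at h₀
  have h₀' : Collinear K ({0, a, b, c} : Set W) :=
    (h.collinear_insert_iff_of_ne (by simp) (by simp) hab).2 h₀
  simp only [← collinear_zero_iff_not_linearIndependent]
  exact ⟨h₀'.subset (by simp [Set.insert_subset_iff]),
    h₀'.subset (by simp [Set.insert_subset_iff])⟩

end Collinear

theorem loopmk_of_mul_of_of_collinear {v u r : V} (h : Collinear ℝ ({v, u, r} : Set V)) :
    Loopmk (of (v, u)) * Loopmk (of (u, r)) = Loopmk (of (v, r)) := by
  rw [← map_mul]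
  exact (Con.eq _).2 (ConGen.Rel.of _ _ (.comp v u r h))

theorem loopmk_of_of_not_linearIndependent {x : V × V} (h : ¬ LinearIndependent ℝ ![x.1, x.2]) :
    Loopmk (of x) = 1 :=
  (Con.eq _).2 (ConGen.Rel.of _ _ (.triv x.1 x.2 h))

namespace LoopWord

def Mergeable (x y : V × V) : Prop :=
  x.2 = y.1 ∧ Collinear ℝ ({x.1, x.2, y.2} : Set V)

theorem not_mergeable_iff {x y : V × V} :
    ¬ Mergeable x y ↔ x.2 ≠ y.1 ∨ LinearIndependent ℝ ![x.2 - x.1, y.2 - y.1] := by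
  by_cases h : x.2 = y.1
  · simp [Mergeable, h, collinear_triple_iff_not_linearIndependent_sub]
  · simp [Mergeable, h]

theorem isMinLoopWord_iff {l : List (V × V)} :
    IsMinLoopWord l ↔ (∀ p ∈ l, LinearIndependent ℝ ![p.1, p.2]) ∧
      l.IsChain (fun p q => p.2 ≠ q.1 ∨ LinearIndependent ℝ ![p.2 - p.1, q.2 - q.1]) :=
  Iff.rfl

theorem isMinLoopWord_nil : IsMinLoopWord ([] : List (V × V)) :=
  ⟨by simp, List.isChain_nil⟩

theorem isMinLoopWord_singleton {x : V × V} :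
    IsMinLoopWord [x] ↔ LinearIndependent ℝ ![x.1, x.2] := by
  simp [isMinLoopWord_iff]

theorem isMinLoopWord_cons_cons {x y : V × V} {l : List (V × V)} :
    IsMinLoopWord (x :: y :: l) ↔
      LinearIndependent ℝ ![x.1, x.2] ∧ ¬ Mergeable x y ∧ IsMinLoopWord (y :: l) := by
  simp only [isMinLoopWord_iff, List.forall_mem_cons, List.isChain_cons_cons,
    not_mergeable_iff]
  tauto

theorem _root_.IsMinLoopWord.tail {x : V × V} {l : List (V × V)} (h : IsMinLoopWord (x :: l)) :
    IsMinLoopWord l :=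
  ⟨fun p hp => h.1 p (List.mem_cons_of_mem x hp), h.2.tail⟩

open Classical in
noncomputable def reduceCons (x : V × V) (l : List (V × V)) : List (V × V) :=
  if LinearIndependent ℝ ![x.1, x.2] then
    match l with
    | [] => [x]
    | y :: l => if Mergeable x y then reduceCons (x.1, y.2) l else x :: y :: l
  else l

theorem reduceCons_of_not_linearIndependent {x : V × V} (hx : ¬ LinearIndependent ℝ ![x.1, x.2])
    (l : List (V × V)) : reduceCons x l = l := by
  rw [reduceCons.eq_def, if_neg hx]

theorem reduceCons_self (v : V) (l : List (V × V)) : reduceCons (v, v) l = l :=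
  reduceCons_of_not_linearIndependent (x := (v, v)) (not_linearIndependent_pair_self v) l

theorem reduceCons_nil {x : V × V} (hx : LinearIndependent ℝ ![x.1, x.2]) :
    reduceCons x [] = [x] := by
  rw [reduceCons.eq_def, if_pos hx]

theorem reduceCons_cons_of_mergeable {x y : V × V} (hx : LinearIndependent ℝ ![x.1, x.2])
    (hxy : Mergeable x y) (l : List (V × V)) :
    reduceCons x (y :: l) = reduceCons (x.1, y.2) l := by
  rw [reduceCons.eq_def, if_pos hx]
  exact if_pos hxy

theorem reduceCons_cons_of_not_mergeable {x y : V × V} (hx : LinearIndependent ℝ ![x.1, x.2])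
    (hxy : ¬ Mergeable x y) (l : List (V × V)) : reduceCons x (y :: l) = x :: y :: l := by
  rw [reduceCons.eq_def, if_pos hx]
  exact if_neg hxy

attribute [irreducible] reduceCons

theorem reduceCons_eq_cons {x : V × V} {l : List (V × V)} (h : IsMinLoopWord (x :: l)) :
    reduceCons x l = x :: l := by
  cases l with
  | nil => exact reduceCons_nil (isMinLoopWord_singleton.1 h)
  | cons y l =>
    obtain ⟨hx, hxy, -⟩ := isMinLoopWord_cons_cons.1 h
    exact reduceCons_cons_of_not_mergeable hx hxy l

theorem _root_.IsMinLoopWord.reduceCons {l : List (V × V)} (hl : IsMinLoopWord l) (x : V × V) :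
    IsMinLoopWord (reduceCons x l) := by
  induction l generalizing x with
  | nil =>
    by_cases hx : LinearIndependent ℝ ![x.1, x.2]
    · rw [reduceCons_nil hx, isMinLoopWord_singleton]
      exact hx
    · rw [reduceCons_of_not_linearIndependent hx]
      exact isMinLoopWord_nil
  | cons y l ih =>
    by_cases hx : LinearIndependent ℝ ![x.1, x.2]
    · by_cases hxy : Mergeable x y
      · rw [reduceCons_cons_of_mergeable hx hxy]
        exact ih hl.tail _
      · rw [reduceCons_cons_of_not_mergeable hx hxy, isMinLoopWord_cons_cons]
        exact ⟨hx, hxy, hl⟩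
    · rwa [reduceCons_of_not_linearIndependent hx]

theorem reduceCons_reduceCons_of_not_linearIndependent {v u r : V}
    (hcol : Collinear ℝ ({v, u, r} : Set V))
    (h : ¬ (LinearIndependent ℝ ![v, u] ∧ LinearIndependent ℝ ![u, r])) (l : List (V × V)) :
    reduceCons (v, u) (reduceCons (u, r) l) = reduceCons (v, r) l := by
  by_cases hvu : LinearIndependent ℝ ![v, u]
  · have hur : ¬ LinearIndependent ℝ ![u, r] := fun hur => h ⟨hvu, hur⟩
    obtain rfl : u = r := by
      by_contra hne
      exact (not_linearIndependent_pair_of_collinear hne hur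
        (hcol.subset (by simp [Set.insert_subset_iff]))).1 (LinearIndependent.pair_symm_iff.1 hvu)
    rw [reduceCons_self]
  · rw [reduceCons_of_not_linearIndependent (x := (v, u)) hvu]
    by_cases hur : LinearIndependent ℝ ![u, r]
    · obtain rfl : v = u := by
        by_contra hne
        exact (not_linearIndependent_pair_of_collinear hne hvu hcol).2 hur
      rfl
    · have hvr : ¬ LinearIndependent ℝ ![v, r] := by
        rcases eq_or_ne v u with rfl | hne
        · exact hur
        · exact (not_linearIndependent_pair_of_collinear hne hvu hcol).1
      rw [reduceCons_of_not_linearIndependent (x := (u, r)) hur,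
        reduceCons_of_not_linearIndependent (x := (v, r)) hvr]

theorem reduceCons_reduceCons_of_collinear {l : List (V × V)} (hl : IsMinLoopWord l) {v u r : V}
    (hcol : Collinear ℝ ({v, u, r} : Set V)) :
    reduceCons (v, u) (reduceCons (u, r) l) = reduceCons (v, r) l := by
  induction l generalizing r with
  | nil =>
    by_cases h : LinearIndependent ℝ ![v, u] ∧ LinearIndependent ℝ ![u, r]
    · rw [reduceCons_nil (x := (u, r)) h.2]
      exact reduceCons_cons_of_mergeable (x := (v, u)) (y := (u, r)) h.1 ⟨rfl, hcol⟩ []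
    · exact reduceCons_reduceCons_of_not_linearIndependent hcol h []
  | cons y l ih =>
    by_cases h : LinearIndependent ℝ ![v, u] ∧ LinearIndependent ℝ ![u, r]
    swap
    · exact reduceCons_reduceCons_of_not_linearIndependent hcol h _
    obtain ⟨hvu, hur⟩ := h
    by_cases hury : Mergeable (u, r) y
    swap
    · rw [reduceCons_cons_of_not_mergeable (x := (u, r)) hur hury]
      exact reduceCons_cons_of_mergeable (x := (v, u)) (y := (u, r)) hvu ⟨rfl, hcol⟩ _
    obtain ⟨r', c⟩ := y
    obtain ⟨rfl : r = r', hurc⟩ := hury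
    have hur_ne : u ≠ r := by
      rintro rfl
      exact not_linearIndependent_pair_self u hur
    -- `u ≠ r` puts `v` and `c` on the line through `u` and `r`.
    have hvurc : Collinear ℝ ({v, u, r, c} : Set V) :=
      (hurc.collinear_insert_iff_of_ne (by simp) (by simp) hur_ne).2 hcol
    rw [reduceCons_cons_of_mergeable (x := (u, r)) (y := (r, c)) hur ⟨rfl, hurc⟩,
      ih hl.tail (hvurc.subset (by simp [Set.insert_subset_iff]))]
    by_cases hvr : LinearIndependent ℝ ![v, r]
    · exact (reduceCons_cons_of_mergeable (x := (v, r)) (y := (r, c)) hvr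
        ⟨rfl, hvurc.subset (by simp [Set.insert_subset_iff])⟩ l).symm
    · obtain rfl : v = r := by
        by_contra hne
        exact (not_linearIndependent_pair_of_collinear hne hvr
          (hcol.subset (by simp [Set.insert_subset_iff]))).1 hvu
      rw [reduceCons_self, reduceCons_eq_cons hl]

theorem loopmk_reduceCons (x : V × V) (l : List (V × V)) :
    Loopmk (ofList (reduceCons x l)) = Loopmk (of x) * Loopmk (ofList l) := by
  induction l generalizing x with
  | nil =>
    by_cases hx : LinearIndependent ℝ ![x.1, x.2]
    · simp [reduceCons_nil hx]
    · rw [reduceCons_of_not_linearIndependent hx, loopmk_of_of_not_linearIndependent hx, one_mul]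
  | cons y l ih =>
    by_cases hx : LinearIndependent ℝ ![x.1, x.2]
    swap
    · rw [reduceCons_of_not_linearIndependent hx, loopmk_of_of_not_linearIndependent hx, one_mul]
    by_cases hxy : Mergeable x y
    · obtain ⟨a, b⟩ := x
      obtain ⟨b', c⟩ := y
      obtain ⟨rfl : b = b', habc⟩ := hxy
      rw [reduceCons_cons_of_mergeable hx ⟨rfl, habc⟩, ih, ofList_cons, map_mul,
        ← mul_assoc, loopmk_of_mul_of_of_collinear habc]
    · rw [reduceCons_cons_of_not_mergeable hx hxy, ofList_cons, map_mul]

theorem loopmk_foldr_reduceCons (l m : List (V × V)) :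
    Loopmk (ofList (l.foldr reduceCons m)) = Loopmk (ofList l) * Loopmk (ofList m) := by
  induction l with
  | nil => simp
  | cons x l ih => rw [List.foldr_cons, loopmk_reduceCons, ih, ofList_cons, map_mul, mul_assoc]

theorem _root_.IsMinLoopWord.foldr_reduceCons {m : List (V × V)} (hm : IsMinLoopWord m)
    (l : List (V × V)) : IsMinLoopWord (l.foldr reduceCons m) := by
  induction l with
  | nil => exact hm
  | cons x l ih => exact ih.reduceCons x

theorem foldr_reduceCons_nil_of_isMinLoopWord {l : List (V × V)} (hl : IsMinLoopWord l) :
    l.foldr reduceCons [] = l := by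
  induction l with
  | nil => rfl
  | cons x l ih => rw [List.foldr_cons, ih hl.tail, reduceCons_eq_cons hl]

theorem foldr_reduceCons_eq_of_conGen {w₁ w₂ : FreeMonoid (V × V)}
    (h : ConGen.Rel (LoopRel V) w₁ w₂) {m : List (V × V)} (hm : IsMinLoopWord m) :
    w₁.toList.foldr reduceCons m = w₂.toList.foldr reduceCons m := by
  induction h generalizing m with
  | of _ _ hrel =>
    cases hrel with
    | comp v u r hcol => exact reduceCons_reduceCons_of_collinear hm hcol
    | triv v u hvu => exact reduceCons_of_not_linearIndependent (x := (v, u)) hvu m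
  | refl => rfl
  | symm _ ih => exact (ih hm).symm
  | trans _ _ ih₁ ih₂ => exact (ih₁ hm).trans (ih₂ hm)
  | mul _ _ ih₁ ih₂ =>
    rw [toList_mul, toList_mul, List.foldr_append, List.foldr_append, ih₂ hm,
      ih₁ (hm.foldr_reduceCons _)]

end LoopWord

open LoopWord

theorem loopGrp_exists_unique_minimal_representative_general
    (x : LoopGrp V) :
    ∃! l : List (V × V), IsMinLoopWord l ∧ Loopmk (FreeMonoid.ofList l) = x := by
  obtain ⟨w, rfl⟩ := Con.mk'_surjective x
  refine ⟨w.toList.foldr reduceCons [], ⟨isMinLoopWord_nil.foldr_reduceCons _, ?_⟩, ?_⟩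
  · rw [loopmk_foldr_reduceCons, ofList_toList]
    simp
  · rintro l ⟨hl, hlw⟩
    calc l = (ofList l).toList.foldr reduceCons [] :=
          (foldr_reduceCons_nil_of_isMinLoopWord hl).symm
      _ = w.toList.foldr reduceCons [] :=
        foldr_reduceCons_eq_of_conGen ((Con.eq _).1 hlw) isMinLoopWord_nil

/-- Unique minimal representatives in `Loop(V)`. -/
theorem loopGrp_exists_unique_minimal_representative [FiniteDimensional ℝ V]
    (x : LoopGrp V) :
    ∃! l : List (V × V), IsMinLoopWord l ∧ Loopmk (FreeMonoid.ofList l) = x :=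
  loopGrp_exists_unique_minimal_representative_general x
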